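/- arXiv:1511.05233 — 2 statements merged into one kernel-verified Lean document; each statement's English description precedes it below -/
import Mathlib

section
/- Let τ > 0, let φ be a smooth compactly supported function on ℝ², set φ_τ(x,y) = φ(x,y)·φ(x−τ, y+τ), and let S be a C³ function with |DS(x,y)| ≥ μ > 0 for all (x,y) ∈ Conv_{{v,w}}(supp φ). Then for every point (x,y₀) lying on a segment with endpoints (x,y₁), (x,y₂) ∈ supp φ_τ and every t ∈ [0,τ], the point (x−t, y₀+t) lies in Conv_{{v,w}}(supp φ), and consequently |∂_x∂_y S_τ(x,y₀)| = |∫₀^τ DS(x−t, y₀+t) dt| ≥ τμ. -/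
open MeasureTheory

/-- Partial derivative in the `x` direction. -/
noncomputable def pdx (f : ℝ × ℝ → ℝ) : ℝ × ℝ → ℝ := fun p => fderiv ℝ f p (1, 0)

/-- Partial derivative in the `y` direction. -/
noncomputable def pdy (f : ℝ × ℝ → ℝ) : ℝ × ℝ → ℝ := fun p => fderiv ℝ f p (0, 1)

/-- The differential operator `D = ∂ₓ ∂_y (∂ₓ - ∂_y)`. -/
noncomputable def Dop (S : ℝ × ℝ → ℝ) : ℝ × ℝ → ℝ :=
  pdx (pdy (fun p => pdx S p - pdy S p))

/-- `X` is `v`-convex: whenever `a, b ∈ X` differ by a multiple of `v`,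
the segment joining them lies in `X`. -/
def VConvex (v : ℝ × ℝ) (X : Set (ℝ × ℝ)) : Prop :=
  ∀ a ∈ X, ∀ b ∈ X, (∃ t : ℝ, a - b = t • v) → segment ℝ a b ⊆ X

/-- `ConvV V X` is the smallest set containing `X` which is `v`-convex for every `v ∈ V`. -/
def ConvV (V : Set (ℝ × ℝ)) (X : Set (ℝ × ℝ)) : Set (ℝ × ℝ) :=
  ⋂₀ {Y : Set (ℝ × ℝ) | X ⊆ Y ∧ ∀ v ∈ V, VConvex v Y}

/-- The directions `v = (0,1)` and `w = (-1,1)`. -/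
def vw : Set (ℝ × ℝ) := {(0, 1), (-1, 1)}

-- ==================== helper lemmas ====================

lemma contDiff_pdv {f : ℝ × ℝ → ℝ} {n : WithTop ℕ∞} (hf : ContDiff ℝ (n + 1) f) (w : ℝ × ℝ) :
    ContDiff ℝ n (fun p => fderiv ℝ f p w) :=
  (hf.fderiv_right le_rfl).clm_apply contDiff_const

lemma fderiv_apply_const {f : ℝ × ℝ → ℝ} (hf : ContDiff ℝ 2 f) (w v p : ℝ × ℝ) :
    fderiv ℝ (fun q => fderiv ℝ f q w) p v = fderiv ℝ (fderiv ℝ f) p v w := by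
  have h1 : DifferentiableAt ℝ (fderiv ℝ f) p :=
    ((hf.fderiv_right (m := 1) (by norm_num)).differentiable one_ne_zero p : DifferentiableAt ℝ _ p)
  have h2 : (fun q => fderiv ℝ f q w) = (⇑(ContinuousLinearMap.apply ℝ ℝ w) ∘ fderiv ℝ f) := rfl
  have := ((ContinuousLinearMap.apply ℝ ℝ w).hasFDerivAt.comp p h1.hasFDerivAt).fderiv
  rw [h2, this]; rfl

lemma schwarz {f : ℝ × ℝ → ℝ} (hf : ContDiff ℝ 2 f) (p v w : ℝ × ℝ) :
    fderiv ℝ (fderiv ℝ f) p v w = fderiv ℝ (fderiv ℝ f) p w v :=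
  second_derivative_symmetric (f := f)
    (fun y => (hf.differentiable two_ne_zero y).hasFDerivAt)
    (((hf.fderiv_right (m := 1) (by norm_num)).differentiable one_ne_zero p).hasFDerivAt) v w

lemma pdx_pdy_comm {f : ℝ × ℝ → ℝ} (hf : ContDiff ℝ 2 f) :
    pdx (pdy f) = pdy (pdx f) := by
  funext p
  unfold pdx pdy
  rw [fderiv_apply_const hf (0,1) (1,0) p, fderiv_apply_const hf (1,0) (0,1) p,
    schwarz hf]

lemma fderiv_translate {f : ℝ × ℝ → ℝ} (hf : Differentiable ℝ f) (a p : ℝ × ℝ) :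
    fderiv ℝ (fun z => f (z + a)) p = fderiv ℝ f (p + a) := by
  have h : HasFDerivAt (fun z : ℝ × ℝ => f (z + a))
      ((fderiv ℝ f (p + a)).comp (ContinuousLinearMap.id ℝ (ℝ × ℝ))) p :=
    (hf (p + a)).hasFDerivAt.comp p ((hasFDerivAt_id p).add_const a)
  simpa using h.fderiv

lemma diff_translate {f : ℝ × ℝ → ℝ} (hf : Differentiable ℝ f) (a p : ℝ × ℝ) :
    DifferentiableAt ℝ (fun z : ℝ × ℝ => f (z + a)) p :=
  ((hf (p + a)).hasFDerivAt.comp p ((hasFDerivAt_id p).add_const a)).differentiableAt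

lemma three_eq : (3 : WithTop ℕ∞) = 2 + 1 := by norm_num
lemma two_eq : (2 : WithTop ℕ∞) = 1 + 1 := by norm_num
lemma one_eq : (1 : WithTop ℕ∞) = 0 + 1 := by norm_num

lemma key (τ : ℝ) (S : ℝ × ℝ → ℝ) (hS : ContDiff ℝ 3 S) (p : ℝ × ℝ) :
    pdx (pdy (fun z : ℝ × ℝ => S z - S (z.1 - τ, z.2 + τ))) p
      = ∫ t in (0:ℝ)..τ, Dop S (p + t • ((-1:ℝ), (1:ℝ))) := by
  set a : ℝ × ℝ := (-τ, τ) with ha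
  set u : ℝ × ℝ := ((-1:ℝ), (1:ℝ)) with hu'
  set c : ℝ → ℝ × ℝ := fun t => p + t • u with hc'
  have hS2 : ContDiff ℝ 2 S := hS.of_le (by norm_num)
  have hSd : Differentiable ℝ S := hS.differentiable (by norm_num)
  have hpdyS : ContDiff ℝ 2 (pdy S) := contDiff_pdv (three_eq ▸ hS) (0,1)
  have hpdxS : ContDiff ℝ 2 (pdx S) := contDiff_pdv (three_eq ▸ hS) (1,0)
  set G : ℝ × ℝ → ℝ := pdx (pdy S) with hG'
  have hG : ContDiff ℝ 1 G := contDiff_pdv (two_eq ▸ hpdyS) (1,0)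
  have hGd : Differentiable ℝ G := hG.differentiable one_ne_zero
  have hpdySd : Differentiable ℝ (pdy S) := hpdyS.differentiable two_ne_zero
  -- rewrite the shifted function as a translation
  have hTe : (fun z : ℝ × ℝ => S z - S (z.1 - τ, z.2 + τ)) = fun z => S z - S (z + a) := by
    funext z
    have : (z.1 - τ, z.2 + τ) = z + a := by
      simp [ha, Prod.ext_iff, sub_eq_add_neg]
    rw [this]
  -- first derivative
  have hpdy : pdy (fun z : ℝ × ℝ => S z - S (z + a)) = fun q => pdy S q - pdy S (q + a) := by
    funext q
    unfold pdy
    rw [fderiv_fun_sub (hSd q) (diff_translate hSd a q)]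
    simp [fderiv_translate hSd a q]
  -- second derivative
  have hpdx : pdx (pdy (fun z : ℝ × ℝ => S z - S (z + a))) p = G p - G (p + a) := by
    rw [hpdy]
    unfold pdx
    rw [fderiv_fun_sub (hpdySd p) (diff_translate hpdySd a p)]
    simp [hG', pdx, fderiv_translate hpdySd a p]
  -- Dop in terms of G
  have hDop : Dop S = fun q => pdx G q - pdy G q := by
    unfold Dop
    have hInner : pdy (fun q => pdx S q - pdy S q) = fun q => G q - pdy (pdy S) q := by
      funext q
      show fderiv ℝ (fun q => pdx S q - pdy S q) q (0,1) = _
      rw [fderiv_fun_sub ((hpdxS.differentiable two_ne_zero) q) (hpdySd q)]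
      simp only [ContinuousLinearMap.sub_apply]
      have h3 : fderiv ℝ (pdx S) q (0,1) = pdy (pdx S) q := rfl
      have hcomm := congrFun (pdx_pdy_comm hS2) q
      rw [h3, ← hcomm, ← hG']
      rfl
    rw [hInner]
    funext q
    have hpdypdySd : Differentiable ℝ (pdy (pdy S)) :=
      (contDiff_pdv (two_eq ▸ hpdyS) (0,1)).differentiable one_ne_zero
    show fderiv ℝ (fun q => G q - pdy (pdy S) q) q (1,0) = _
    rw [fderiv_fun_sub (hGd q) (hpdypdySd q)]
    simp only [ContinuousLinearMap.sub_apply]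
    have h3 : fderiv ℝ (pdy (pdy S)) q (1,0) = pdx (pdy (pdy S)) q := rfl
    have hcomm := congrFun (pdx_pdy_comm hpdyS) q
    rw [h3, hcomm, ← hG']
    rfl
  -- the path and its derivative
  have hc : ∀ t : ℝ, HasDerivAt c u t := by
    intro t
    have h1 : HasDerivAt (fun s : ℝ => s • u) ((1:ℝ) • u) t := (hasDerivAt_id t).smul_const u
    simpa [hc'] using h1.const_add p
  have hg : ∀ t : ℝ, HasDerivAt (fun s => G (c s)) (fderiv ℝ G (c t) u) t := fun t =>
    ((hGd (c t)).hasFDerivAt).comp_hasDerivAt t (hc t)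
  have hud : ∀ q, fderiv ℝ G q u = pdy G q - pdx G q := by
    intro q
    have h2 : u = (0,1) - (1,0) := by rw [hu']; norm_num [Prod.ext_iff]
    rw [h2, map_sub]; rfl
  have hneg : ∀ t : ℝ, fderiv ℝ G (c t) u = -(Dop S (c t)) := by
    intro t; rw [hud, hDop]; ring
  have hcont : Continuous fun t => Dop S (c t) := by
    rw [hDop]
    have h1 : Continuous (fun q => pdx G q - pdy G q) := by
      have hx : Continuous (pdx G) := (contDiff_pdv (one_eq ▸ hG) (1,0)).continuous
      have hy : Continuous (pdy G) := (contDiff_pdv (one_eq ▸ hG) (0,1)).continuous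
      exact hx.sub hy
    exact h1.comp (continuous_const.add (continuous_id.smul continuous_const))
  have hFTC : (∫ t in (0:ℝ)..τ, fderiv ℝ G (c t) u) = G (c τ) - G (c 0) := by
    apply intervalIntegral.integral_eq_sub_of_hasDerivAt (fun t _ => hg t)
    have : (fun t => fderiv ℝ G (c t) u) = fun t => -(Dop S (c t)) := funext hneg
    rw [this]
    exact hcont.neg.intervalIntegrable 0 τ
  have hc0 : c 0 = p := by simp [hc']
  have hcτ : c τ = p + a := by
    simp [hc', ha, hu', Prod.ext_iff]
  have hint : (∫ t in (0:ℝ)..τ, Dop S (c t)) = G p - G (p + a) := by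
    have : (∫ t in (0:ℝ)..τ, Dop S (c t)) = ∫ t in (0:ℝ)..τ, -(fderiv ℝ G (c t) u) := by
      congr 1; funext t; rw [hneg t, neg_neg]
    rw [this, intervalIntegral.integral_neg, hFTC, hc0, hcτ]
    ring
  rw [hTe, hpdx, ← hint]

/-- Let `τ > 0`, `φ` a smooth compactly supported cutoff,
`φ_τ(x,y) = φ(x,y)·φ(x−τ,y+τ)`, and let `S` be `C³` with `|DS| ≥ μ > 0` on
`Conv_{v,w}(supp φ)`.  Then for every `(x,y₀)` on a vertical segment with endpoints
`(x,y₁), (x,y₂) ∈ supp φ_τ` and every `t ∈ [0,τ]`, the point `(x−t, y₀+t)` lies in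
`Conv_{v,w}(supp φ)`, and consequently
`|∂ₓ∂_y S_τ(x,y₀)| = |∫₀^τ DS(x−t,y₀+t) dt| ≥ τμ`. -/
theorem statement12
    (τ μ : ℝ) (hτ : 0 < τ) (hμ : 0 < μ)
    (φ : ℝ × ℝ → ℝ) (hφ : ContDiff ℝ (⊤ : ℕ∞) φ) (hφc : HasCompactSupport φ)
    (S : ℝ × ℝ → ℝ) (hS : ContDiff ℝ 3 S)
    (hDS : ∀ z ∈ ConvV vw (tsupport φ), μ ≤ |Dop S z|) :
    ∀ x y₀ y₁ y₂ : ℝ,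
      (x, y₁) ∈ tsupport (fun z : ℝ × ℝ => φ z * φ (z.1 - τ, z.2 + τ)) →
      (x, y₂) ∈ tsupport (fun z : ℝ × ℝ => φ z * φ (z.1 - τ, z.2 + τ)) →
      (x, y₀) ∈ segment ℝ (x, y₁) ((x, y₂) : ℝ × ℝ) →
      (∀ t ∈ Set.Icc (0 : ℝ) τ, (x - t, y₀ + t) ∈ ConvV vw (tsupport φ)) ∧
        |pdx (pdy (fun z : ℝ × ℝ => S z - S (z.1 - τ, z.2 + τ))) (x, y₀)| =
          |∫ t in (0 : ℝ)..τ, Dop S (x - t, y₀ + t)| ∧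
        τ * μ ≤ |pdx (pdy (fun z : ℝ × ℝ => S z - S (z.1 - τ, z.2 + τ))) (x, y₀)| := by
  intro x y₀ y₁ y₂ h1 h2 hseg
  set K := ConvV vw (tsupport φ) with hK
  -- basic facts about K
  have hsubK : tsupport φ ⊆ K := by
    intro z hz Y hY
    exact hY.1 hz
  have hKconv : ∀ v ∈ vw, VConvex v K := by
    intro v hv a haK b hbK hab z hz Y hY
    exact hY.2 v hv a (haK Y hY) b (hbK Y hY) hab hz
  -- support facts
  have hsupp1 : tsupport (fun z : ℝ × ℝ => φ z * φ (z.1 - τ, z.2 + τ)) ⊆ tsupport φ := by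
    apply closure_mono
    intro z hz
    simp only [Function.mem_support] at hz ⊢
    exact fun h => hz (by rw [h, zero_mul])
  have hsupp2 : tsupport (fun z : ℝ × ℝ => φ z * φ (z.1 - τ, z.2 + τ)) ⊆
      {z : ℝ × ℝ | (z.1 - τ, z.2 + τ) ∈ tsupport φ} := by
    apply closure_minimal
    · intro z hz
      simp only [Function.mem_support] at hz
      have : φ (z.1 - τ, z.2 + τ) ≠ 0 := fun h => hz (by rw [h, mul_zero])
      exact subset_closure this
    · have hcl : IsClosed (tsupport φ) := isClosed_closure
      have : Continuous (fun z : ℝ × ℝ => ((z.1 - τ, z.2 + τ) : ℝ × ℝ)) := by continuity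
      exact hcl.preimage this
  have hy1 : (x, y₁) ∈ K := hsubK (hsupp1 h1)
  have hy2 : (x, y₂) ∈ K := hsubK (hsupp1 h2)
  have hy1' : ((x - τ, y₁ + τ) : ℝ × ℝ) ∈ K := hsubK (hsupp2 h1)
  have hy2' : ((x - τ, y₂ + τ) : ℝ × ℝ) ∈ K := hsubK (hsupp2 h2)
  -- (x, y₀) ∈ K by v-convexity
  have hvK : VConvex (0,1) K := hKconv _ (by simp [vw])
  have hwK : VConvex (-1,1) K := hKconv _ (by simp [vw])
  have hy0 : ((x, y₀) : ℝ × ℝ) ∈ K :=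
    hvK _ hy1 _ hy2 ⟨y₁ - y₂, by simp [Prod.ext_iff]⟩ hseg
  -- (x - τ, y₀ + τ) ∈ K : translate the segment
  obtain ⟨α, β, hα, hβ, hαβ, hcomb⟩ := hseg
  have hseg' : ((x - τ, y₀ + τ) : ℝ × ℝ) ∈ segment ℝ ((x - τ, y₁ + τ) : ℝ × ℝ) ((x - τ, y₂ + τ) : ℝ × ℝ) := by
    refine ⟨α, β, hα, hβ, hαβ, ?_⟩
    have h0 : α • ((x, y₁) : ℝ × ℝ) + β • ((x, y₂) : ℝ × ℝ) = (x, y₀) := hcomb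
    simp only [Prod.ext_iff, Prod.smul_mk, Prod.mk_add_mk, smul_eq_mul] at h0 ⊢
    constructor
    · nlinarith [h0.1]
    · nlinarith [h0.2]
  have hy0' : ((x - τ, y₀ + τ) : ℝ × ℝ) ∈ K :=
    hvK _ hy1' _ hy2' ⟨y₁ - y₂, by simp [Prod.ext_iff]⟩ hseg'
  -- part 1
  have part1 : ∀ t ∈ Set.Icc (0 : ℝ) τ, ((x - t, y₀ + t) : ℝ × ℝ) ∈ K := by
    intro t ht
    have hmem : ((x - t, y₀ + t) : ℝ × ℝ) ∈ segment ℝ ((x, y₀) : ℝ × ℝ) ((x - τ, y₀ + τ) : ℝ × ℝ) := by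
      refine ⟨1 - t/τ, t/τ, ?_, ?_, by ring, ?_⟩
      · have := div_le_one_of_le₀ ht.2 hτ.le
        linarith
      · exact div_nonneg ht.1 hτ.le
      · simp only [Prod.ext_iff, Prod.smul_mk, Prod.mk_add_mk, smul_eq_mul]
        constructor
        · field_simp; ring
        · field_simp; ring
    exact hwK _ hy0 _ hy0' ⟨-τ, by simp [Prod.ext_iff]⟩ hmem
  -- part 2
  have hkey := key τ S hS (x, y₀)
  have hpath : (fun t : ℝ => ((x, y₀) : ℝ × ℝ) + t • ((-1:ℝ), (1:ℝ))) =
      fun t : ℝ => ((x - t, y₀ + t) : ℝ × ℝ) := by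
    funext t
    simp [Prod.ext_iff, sub_eq_add_neg]
  have hkey' : pdx (pdy (fun z : ℝ × ℝ => S z - S (z.1 - τ, z.2 + τ))) (x, y₀)
      = ∫ t in (0:ℝ)..τ, Dop S (x - t, y₀ + t) := by
    rw [hkey]
    congr 1
    funext t
    rw [congrFun hpath t]
  refine ⟨part1, by rw [hkey'], ?_⟩
  -- part 3 : sign argument
  set f : ℝ → ℝ := fun t => Dop S (x - t, y₀ + t) with hf'
  have hfK : ∀ t ∈ Set.Icc (0:ℝ) τ, μ ≤ |f t| := fun t ht => hDS _ (part1 t ht)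
  have hScont : Continuous (Dop S) := by
    unfold Dop
    have hS2 : ContDiff ℝ 2 S := hS.of_le (by norm_num)
    have hsub : ContDiff ℝ 2 (fun p => pdx S p - pdy S p) :=
      (contDiff_pdv (three_eq ▸ hS) (1,0)).sub (contDiff_pdv (three_eq ▸ hS) (0,1))
    have h2 : ContDiff ℝ 1 (pdy (fun p => pdx S p - pdy S p)) :=
      contDiff_pdv (two_eq ▸ hsub) (0,1)
    exact (contDiff_pdv (one_eq ▸ h2) (1,0)).continuous
  have hfc : Continuous f := by
    apply hScont.comp
    continuity
  have hsign : (∀ t ∈ Set.Icc (0:ℝ) τ, μ ≤ f t) ∨ (∀ t ∈ Set.Icc (0:ℝ) τ, f t ≤ -μ) := by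
    by_contra hcon
    push_neg at hcon
    obtain ⟨⟨t₁, ht₁, ht₁'⟩, ⟨t₂, ht₂, ht₂'⟩⟩ := hcon
    have hneg1 : f t₁ ≤ -μ := by
      rcases le_abs.mp (hfK t₁ ht₁) with h | h
      · linarith
      · linarith
    have hpos2 : μ ≤ f t₂ := by
      rcases le_abs.mp (hfK t₂ ht₂) with h | h
      · exact h
      · linarith
    have h0mem : (0:ℝ) ∈ Set.uIcc (f t₁) (f t₂) := by
      rw [Set.mem_uIcc]
      left
      constructor <;> linarith
    have := intermediate_value_uIcc (hfc.continuousOn (s := Set.uIcc t₁ t₂)) h0mem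
    obtain ⟨t₀, ht₀, hft₀⟩ := this
    have ht₀' : t₀ ∈ Set.Icc (0:ℝ) τ := by
      have hsub2 : Set.uIcc t₁ t₂ ⊆ Set.Icc (0:ℝ) τ := Set.uIcc_subset_Icc ht₁ ht₂
      exact hsub2 ht₀
    have := hfK t₀ ht₀'
    rw [hft₀] at this
    simp at this
    linarith
  rw [hkey']
  have hintg : IntervalIntegrable f volume 0 τ := hfc.intervalIntegrable 0 τ
  have hconst : IntervalIntegrable (fun _ : ℝ => μ) volume 0 τ := intervalIntegrable_const
  rcases hsign with hpos | hneg
  · have hge : τ * μ ≤ ∫ t in (0:ℝ)..τ, f t := by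
      have := intervalIntegral.integral_mono_on hτ.le hconst hintg (fun t ht => hpos t ht)
      simpa [mul_comm] using this
    calc τ * μ ≤ ∫ t in (0:ℝ)..τ, f t := hge
      _ ≤ |∫ t in (0:ℝ)..τ, f t| := le_abs_self _
  · have hle : (∫ t in (0:ℝ)..τ, f t) ≤ -(τ * μ) := by
      have := intervalIntegral.integral_mono_on hτ.le hintg
        (intervalIntegrable_const (c := -μ)) (fun t ht => hneg t ht)
      simpa [mul_comm, mul_neg] using this
    calc τ * μ ≤ -(∫ t in (0:ℝ)..τ, f t) := by linarith
      _ ≤ |∫ t in (0:ℝ)..τ, f t| := neg_le_abs _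
end

section
/- Let θ > 2, let a, b ≥ 0 and c > 0, and for dyadic numbers σ = 2^{−j}, ρ = 2^{−k} (j, k ≥ 0 integers) and |λ| ≥ 1 define S₁(σ,ρ) = (|λ| σ^a ρ^b)^{−1/4} and S₂(σ,ρ) = ρ σ^c, and let A, B be determined by S₁(σ,ρ)^4 · S₂(σ,ρ)^{θ−2} = |λ|^{−1} σ^A ρ^B. If A > 0 or B > 0 (with A, B ≥ 0), then Σ_{σ,ρ dyadic in (0,1]} min{S₁(σ,ρ), S₂(σ,ρ)} ≤ C |λ|^{−1/(θ+2)}, where C depends on θ, a, b, c, A, B but not on λ. -/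
open MeasureTheory

section Aux

open Real

lemma min_le_rpow_interp' {x y t : ℝ} (hx : 0 < x) (hy : 0 < y) (ht0 : 0 ≤ t) (ht1 : t ≤ 1) :
    min x y ≤ x ^ t * y ^ (1 - t) := by
  have hm : 0 < min x y := lt_min hx hy
  calc min x y = (min x y) ^ t * (min x y) ^ (1 - t) := by
        rw [← Real.rpow_add hm]; simp
    _ ≤ x ^ t * y ^ (1 - t) := by
        apply mul_le_mul
        · exact Real.rpow_le_rpow hm.le (min_le_left _ _) ht0
        · exact Real.rpow_le_rpow hm.le (min_le_right _ _) (by linarith)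
        · positivity
        · positivity

lemma pow_rpow_comm' {u : ℝ} (hu : 0 ≤ u) (n : ℕ) (t : ℝ) :
    (u ^ n) ^ t = (u ^ t) ^ n := by
  rw [← Real.rpow_natCast u n, ← Real.rpow_mul hu, mul_comm,
    Real.rpow_mul hu, Real.rpow_natCast]

/-- crossover summation lemma -/
lemma crossover' {u v t : ℝ} (hu : 1 < u) (hv0 : 0 < v) (hv1 : v < 1)
    (ht0 : 0 < t) (huv : u ^ t * v ^ (1 - t) = 1)
    (X Y : ℝ) (hX : 0 < X) (hY : 0 < Y) :
    ∑' k : ℕ, min (X * u ^ k) (Y * v ^ k) ≤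
      (u / (v * (u - 1)) + 1 / (1 - v)) * (X ^ t * Y ^ (1 - t)) := by
  have hu0 : (0:ℝ) < u := lt_trans one_pos hu
  have hu1 : (0:ℝ) < u - 1 := by linarith
  have h1v : (0:ℝ) < 1 - v := by linarith
  set M := X ^ t * Y ^ (1 - t) with hM
  have hMpos : 0 < M := by positivity
  set f : ℕ → ℝ := fun k => min (X * u ^ k) (Y * v ^ k) with hf
  have hfle : ∀ k, f k ≤ Y * v ^ k := fun k => min_le_right _ _
  have hfpos : ∀ k, 0 < f k := fun k => lt_min (by positivity) (by positivity)
  have hgeo : Summable (fun k : ℕ => Y * v ^ k) :=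
    (summable_geometric_of_lt_one hv0.le hv1).mul_left Y
  have hsum : Summable f :=
    Summable.of_nonneg_of_le (fun k => (hfpos k).le) hfle hgeo
  have hex : ∃ n : ℕ, Y * v ^ n ≤ X * u ^ n := by
    obtain ⟨n, hn⟩ := pow_unbounded_of_one_lt (Y / X) hu
    refine ⟨n, ?_⟩
    have h1 : Y < X * u ^ n := by rw [div_lt_iff₀ hX] at hn; linarith [hn]
    have h2 : Y * v ^ n ≤ Y * 1 := by
      have := pow_le_one₀ hv0.le hv1.le (n := n); nlinarith
    simpa using h2.trans (by linarith)
  classical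
  set n := Nat.find hex with hn
  have hcross : Y * v ^ n ≤ X * u ^ n := Nat.find_spec hex
  have hpeak : Y * v ^ n ≤ M := by
    have h1 : (Y * v ^ n) ^ t ≤ (X * u ^ n) ^ t :=
      Real.rpow_le_rpow (by positivity) hcross ht0.le
    have h2 : Y * v ^ n = (Y * v ^ n) ^ t * (Y * v ^ n) ^ (1 - t) := by
      rw [← Real.rpow_add (by positivity)]; simp
    have h3 : (X * u ^ n) ^ t * (Y * v ^ n) ^ (1 - t) = M := by
      rw [Real.mul_rpow hX.le (by positivity), Real.mul_rpow hY.le (by positivity),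
        pow_rpow_comm' hu0.le, pow_rpow_comm' hv0.le, hM]
      have h4 : (u ^ t) ^ n * (v ^ (1 - t)) ^ n = 1 := by
        rw [← mul_pow, huv, one_pow]
      nlinarith [Real.rpow_pos_of_pos hX t, Real.rpow_pos_of_pos hY (1-t),
        pow_pos (Real.rpow_pos_of_pos hu0 t) n, pow_pos (Real.rpow_pos_of_pos hv0 (1-t)) n]
    calc Y * v ^ n = (Y * v ^ n) ^ t * (Y * v ^ n) ^ (1 - t) := h2
      _ ≤ (X * u ^ n) ^ t * (Y * v ^ n) ^ (1 - t) :=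
          mul_le_mul_of_nonneg_right h1 (by positivity)
      _ = M := h3
  have hhead : ∑ i ∈ Finset.range n, f i ≤ u / (v * (u - 1)) * M := by
    rcases Nat.eq_zero_or_pos n with h0 | hpos
    · rw [h0]
      simp only [Finset.range_zero, Finset.sum_empty]
      have : 0 < u / (v * (u - 1)) := div_pos hu0 (by positivity)
      positivity
    · obtain ⟨m, hm⟩ : ∃ m, n = m + 1 := ⟨n - 1, by omega⟩
      have hmlt : X * u ^ m < Y * v ^ m := by
        have := Nat.find_min hex (m := m) (by omega)
        push_neg at this; exact this
      have hXun : X * u ^ n ≤ (u / v) * (Y * v ^ n) := by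
        rw [hm, pow_succ, pow_succ]
        have h := mul_le_mul_of_nonneg_left hmlt.le hu0.le
        have hv' : v ≠ 0 := ne_of_gt hv0
        calc X * (u ^ m * u) = u * (X * u ^ m) := by ring
          _ ≤ u * (Y * v ^ m) := h
          _ = (u / v) * (Y * (v ^ m * v)) := by field_simp
      have hgs : ∑ i ∈ Finset.range n, u ^ i ≤ u ^ n / (u - 1) := by
        rw [geom_sum_eq (ne_of_gt hu), div_le_div_iff₀ (by linarith) (by linarith)]
        nlinarith [pow_pos hu0 n]
      have hsum1 : ∑ i ∈ Finset.range n, f i ≤ X * (u ^ n / (u - 1)) := by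
        calc ∑ i ∈ Finset.range n, f i ≤ ∑ i ∈ Finset.range n, X * u ^ i :=
              Finset.sum_le_sum fun i _ => min_le_left _ _
          _ = X * ∑ i ∈ Finset.range n, u ^ i := by rw [Finset.mul_sum]
          _ ≤ X * (u ^ n / (u - 1)) := mul_le_mul_of_nonneg_left hgs hX.le
      have h2 : (u / v) * (Y * v ^ n) ≤ (u / v) * M :=
        mul_le_mul_of_nonneg_left hpeak (by positivity)
      have hfin : X * (u ^ n / (u - 1)) ≤ u / (v * (u - 1)) * M := by
        rw [← mul_div_assoc, div_le_iff₀ hu1]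
        have hv' : v ≠ 0 := ne_of_gt hv0
        have hu1' : u - 1 ≠ 0 := ne_of_gt hu1
        calc X * u ^ n ≤ (u / v) * M := hXun.trans h2
          _ = u / (v * (u - 1)) * M * (u - 1) := by field_simp
      linarith
  have htail : ∑' i : ℕ, f (i + n) ≤ 1 / (1 - v) * M := by
    have h1 : ∑' i : ℕ, f (i + n) ≤ ∑' i : ℕ, (Y * v ^ n) * v ^ i := by
      apply Summable.tsum_le_tsum _ ((hsum.comp_injective (add_left_injective n)))
        ((summable_geometric_of_lt_one hv0.le hv1).mul_left _)
      intro i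
      calc f (i + n) ≤ Y * v ^ (i + n) := hfle _
        _ = (Y * v ^ n) * v ^ i := by rw [pow_add]; ring
    have h2 : ∑' i : ℕ, (Y * v ^ n) * v ^ i = (Y * v ^ n) * (1 - v)⁻¹ := by
      rw [tsum_mul_left, tsum_geometric_of_lt_one hv0.le hv1]
    rw [h2] at h1
    calc ∑' i : ℕ, f (i + n) ≤ (Y * v ^ n) * (1 - v)⁻¹ := h1
      _ ≤ M * (1 - v)⁻¹ := mul_le_mul_of_nonneg_right hpeak (by positivity)
      _ = 1 / (1 - v) * M := by ring
  have hsplit := (Summable.sum_add_tsum_nat_add n hsum).symm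
  calc ∑' k, f k = ∑ i ∈ Finset.range n, f i + ∑' i : ℕ, f (i + n) := hsplit
    _ ≤ u / (v * (u - 1)) * M + 1 / (1 - v) * M := add_le_add hhead htail
    _ = (u / (v * (u - 1)) + 1 / (1 - v)) * M := by ring

lemma tsum_bound' {g : ℕ × ℕ → ℝ} {D r s : ℝ} (hr0 : 0 ≤ r) (hr1 : r < 1)
    (hs0 : 0 ≤ s) (hs1 : s < 1) (hg0 : ∀ jk, 0 ≤ g jk)
    (hle : ∀ jk : ℕ × ℕ, g jk ≤ D * (r ^ jk.1 * s ^ jk.2)) :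
    ∑' jk : ℕ × ℕ, g jk ≤ D * ((1 - r)⁻¹ * (1 - s)⁻¹) := by
  have hrs : Summable (fun jk : ℕ × ℕ => r ^ jk.1 * s ^ jk.2) :=
    Summable.mul_of_nonneg (summable_geometric_of_lt_one hr0 hr1)
      (summable_geometric_of_lt_one hs0 hs1)
      (fun n => pow_nonneg hr0 n) (fun n => pow_nonneg hs0 n)
  have hh : Summable (fun jk : ℕ × ℕ => D * (r ^ jk.1 * s ^ jk.2)) := hrs.mul_left D
  have hgs : Summable g := Summable.of_nonneg_of_le hg0 hle hh
  have h1 : ∑' jk, g jk ≤ ∑' jk : ℕ × ℕ, D * (r ^ jk.1 * s ^ jk.2) :=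
    Summable.tsum_le_tsum hle hgs hh
  have h2 : ∑' jk : ℕ × ℕ, D * (r ^ jk.1 * s ^ jk.2)
      = D * ∑' jk : ℕ × ℕ, (r ^ jk.1 * s ^ jk.2) := tsum_mul_left
  have h3 : ∑' jk : ℕ × ℕ, (r ^ jk.1 * s ^ jk.2)
      = (∑' j : ℕ, r ^ j) * (∑' k : ℕ, s ^ k) := by
    have hrow : ∀ j : ℕ, Summable (fun k : ℕ => r ^ j * s ^ k) :=
      fun j => (summable_geometric_of_lt_one hs0 hs1).mul_left _
    rw [Summable.tsum_prod' hrs hrow]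
    simp_rw [tsum_mul_left]
    rw [tsum_mul_right]
  rw [h2, h3, tsum_geometric_of_lt_one hr0 hr1, tsum_geometric_of_lt_one hs0 hs1] at h1
  exact h1

lemma tsum_bound2' {g : ℕ × ℕ → ℝ} {D r : ℝ} (hr0 : 0 ≤ r) (hr1 : r < 1)
    (hg0 : ∀ jk, 0 ≤ g jk)
    (hrow : ∀ j, Summable fun k => g (j, k))
    (hle : ∀ j : ℕ, (∑' k : ℕ, g (j, k)) ≤ D * r ^ j) :
    ∑' jk : ℕ × ℕ, g jk ≤ D * (1 - r)⁻¹ := by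
  have hgeo : Summable (fun j : ℕ => D * r ^ j) :=
    (summable_geometric_of_lt_one hr0 hr1).mul_left D
  have hcol : Summable (fun j => ∑' k, g (j, k)) :=
    Summable.of_nonneg_of_le (fun j => tsum_nonneg (fun k => hg0 _)) hle hgeo
  have hgs : Summable g := (summable_prod_of_nonneg (fun jk => hg0 jk)).mpr ⟨hrow, hcol⟩
  rw [Summable.tsum_prod' hgs hrow]
  calc ∑' j, ∑' k, g (j, k) ≤ ∑' j : ℕ, D * r ^ j := Summable.tsum_le_tsum hle hcol hgeo
    _ = D * (1 - r)⁻¹ := by rw [tsum_mul_left, tsum_geometric_of_lt_one hr0 hr1]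

end Aux

/-- dyadic summation, non-logarithmic case.  Let `θ > 2`, `a, b ≥ 0`,
`c > 0`, and for dyadic `σ = 2^{−j}`, `ρ = 2^{−k}` set `S₁ = (|λ| σ^a ρ^b)^{−1/4}`,
`S₂ = ρ σ^c`.  Writing `S₁⁴ S₂^{θ−2} = |λ|^{−1} σ^A ρ^B` (so `A = c(θ−2) − a`,
`B = (θ−2) − b`), if `A, B ≥ 0` and `A > 0` or `B > 0`, then
`Σ_{σ,ρ} min{S₁,S₂} ≤ C |λ|^{−1/(θ+2)}`. -/
theorem statement15
    (θ a b c : ℝ) (hθ : 2 < θ) (ha : 0 ≤ a) (hb : 0 ≤ b) (hc : 0 < c)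
    (hA : 0 ≤ c * (θ - 2) - a) (hB : 0 ≤ θ - 2 - b)
    (hAB : 0 < c * (θ - 2) - a ∨ 0 < θ - 2 - b) :
    ∃ C > 0, ∀ lam : ℝ, 1 ≤ |lam| →
      (∑' jk : ℕ × ℕ,
          min ((|lam| * ((2 : ℝ) ^ (-(jk.1 : ℝ))) ^ a * ((2 : ℝ) ^ (-(jk.2 : ℝ))) ^ b) ^
                (-(1 / 4 : ℝ)))
            (((2 : ℝ) ^ (-(jk.2 : ℝ))) * ((2 : ℝ) ^ (-(jk.1 : ℝ))) ^ c)) ≤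
        C * |lam| ^ (-(1 / (θ + 2))) := by
  have hθ2 : θ + 2 ≠ 0 := by linarith
  have hθ2' : (0:ℝ) < θ + 2 := by linarith
  have hT0 : (0:ℝ) < 4 / (θ + 2) := by positivity
  have hT1 : 4 / (θ + 2) ≤ 1 := by rw [div_le_one hθ2']; linarith
  rcases eq_or_lt_of_le hB with hB0 | hBpos
  · -- B = 0 case : b = θ - 2 > 0, A > 0
    have hApos : 0 < c * (θ - 2) - a := by
      rcases hAB with h | h
      · exact h
      · exfalso; linarith [hB0]
    have hbval : b = θ - 2 := by linarith [hB0]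
    have hbpos : 0 < b := by rw [hbval]; linarith
    -- u = 2^(b/4), v = 2^(-1)
    have hu : 1 < (2:ℝ) ^ (b/4 : ℝ) :=
      Real.one_lt_rpow_iff_of_pos (by norm_num) |>.mpr (Or.inl ⟨one_lt_two, by positivity⟩)
    have hv0 : (0:ℝ) < (2:ℝ) ^ (-(1:ℝ)) := Real.rpow_pos_of_pos two_pos _
    have hv1 : (2:ℝ) ^ (-(1:ℝ)) < 1 :=
      Real.rpow_lt_one_of_one_lt_of_neg one_lt_two (by norm_num)
    have huv : ((2:ℝ) ^ (b/4 : ℝ)) ^ (4/(θ+2)) * ((2:ℝ) ^ (-(1:ℝ))) ^ (1 - 4/(θ+2)) = 1 := by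
      rw [← Real.rpow_mul (by norm_num), ← Real.rpow_mul (by norm_num),
        ← Real.rpow_add two_pos]
      rw [show b/4 * (4/(θ+2)) + (-(1:ℝ)) * (1 - 4/(θ+2)) = 0 by
        rw [hbval]; field_simp; ring]
      exact Real.rpow_zero 2
    set Cuv : ℝ := (2:ℝ) ^ (b/4 : ℝ) / ((2:ℝ) ^ (-(1:ℝ)) * ((2:ℝ) ^ (b/4 : ℝ) - 1))
        + 1 / (1 - (2:ℝ) ^ (-(1:ℝ))) with hCuv
    have hCuvpos : 0 < Cuv := by
      have h1 : 0 < (2:ℝ) ^ (b/4 : ℝ) - 1 := by linarith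
      have h2 : 0 < 1 - (2:ℝ) ^ (-(1:ℝ)) := by linarith
      have := div_pos (lt_trans one_pos hu) (mul_pos hv0 h1)
      positivity
    set r : ℝ := (2:ℝ) ^ (-((c * (θ - 2) - a)/(θ+2))) with hrdef
    have hr0 : 0 < r := Real.rpow_pos_of_pos two_pos _
    have hr1 : r < 1 := by
      rw [hrdef]
      apply Real.rpow_lt_one_of_one_lt_of_neg one_lt_two
      have : 0 < (c * (θ - 2) - a)/(θ+2) := div_pos hApos hθ2'
      linarith
    refine ⟨Cuv * (1 - r)⁻¹, mul_pos hCuvpos (inv_pos.mpr (by linarith)), fun lam hL => ?_⟩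
    have hL0 : (0:ℝ) < |lam| := lt_of_lt_of_le one_pos hL
    have key : ∀ j : ℕ,
        (∑' k : ℕ, min
          ((|lam| * ((2 : ℝ) ^ (-(j : ℝ))) ^ a * ((2 : ℝ) ^ (-(k : ℝ))) ^ b) ^ (-(1 / 4 : ℝ)))
          (((2 : ℝ) ^ (-(k : ℝ))) * ((2 : ℝ) ^ (-(j : ℝ))) ^ c)) ≤
        (Cuv * |lam| ^ (-(1/(θ+2)))) * r ^ j := by
      intro j
      have hXpos : 0 < |lam| ^ (-(1/4:ℝ)) * (2:ℝ) ^ ((j:ℝ) * (a/4)) := by positivity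
      have hYpos : 0 < ((2:ℝ) ^ (-(j:ℝ))) ^ c := by positivity
      have heq : ∀ k : ℕ,
          min ((|lam| * ((2 : ℝ) ^ (-(j : ℝ))) ^ a * ((2 : ℝ) ^ (-(k : ℝ))) ^ b) ^ (-(1 / 4 : ℝ)))
            (((2 : ℝ) ^ (-(k : ℝ))) * ((2 : ℝ) ^ (-(j : ℝ))) ^ c)
          = min ((|lam| ^ (-(1/4:ℝ)) * (2:ℝ) ^ ((j:ℝ) * (a/4))) * ((2:ℝ) ^ (b/4 : ℝ)) ^ k)
              ((((2:ℝ) ^ (-(j:ℝ))) ^ c) * ((2:ℝ) ^ (-(1:ℝ))) ^ k) := by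
        intro k
        congr 1
        · repeat rw [Real.mul_rpow (by positivity) (by positivity)]
          simp only [← Real.rpow_natCast]
          simp only [Real.rpow_def_of_pos hL0,
            Real.rpow_def_of_pos (by norm_num : (0:ℝ) < 2),
            ← Real.exp_mul, ← Real.exp_add, Real.exp_eq_exp]
          ring
        · repeat rw [Real.mul_rpow (by positivity) (by positivity)]
          simp only [← Real.rpow_natCast]
          simp only [Real.rpow_def_of_pos (by norm_num : (0:ℝ) < 2),
            ← Real.exp_mul, ← Real.exp_add, Real.exp_eq_exp]
          ring
      rw [tsum_congr heq]
      have hcr := crossover' hu hv0 hv1 hT0 huv _ _ hXpos hYpos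
      apply le_trans hcr
      rw [← hCuv]
      have hid : (|lam| ^ (-(1/4:ℝ)) * (2:ℝ) ^ ((j:ℝ) * (a/4))) ^ (4/(θ+2)) *
          (((2:ℝ) ^ (-(j:ℝ))) ^ c) ^ (1 - 4/(θ+2))
          = |lam| ^ (-(1/(θ+2))) * r ^ j := by
        rw [hrdef]
        repeat rw [Real.mul_rpow (by positivity) (by positivity)]
        simp only [← Real.rpow_natCast]
        simp only [Real.rpow_def_of_pos hL0,
          Real.rpow_def_of_pos (by norm_num : (0:ℝ) < 2),
          ← Real.exp_mul, ← Real.exp_add, Real.exp_eq_exp]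
        field_simp
        ring
      rw [hid]
      exact le_of_eq (by ring)
    have hg0 : ∀ jk : ℕ × ℕ,
        0 ≤ min ((|lam| * ((2 : ℝ) ^ (-(jk.1 : ℝ))) ^ a * ((2 : ℝ) ^ (-(jk.2 : ℝ))) ^ b) ^
                (-(1 / 4 : ℝ)))
            (((2 : ℝ) ^ (-(jk.2 : ℝ))) * ((2 : ℝ) ^ (-(jk.1 : ℝ))) ^ c) :=
      fun jk => le_min (by positivity) (by positivity)
    have hrow : ∀ j : ℕ, Summable (fun k : ℕ =>
        min ((|lam| * ((2 : ℝ) ^ (-(j : ℝ))) ^ a * ((2 : ℝ) ^ (-(k : ℝ))) ^ b) ^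
                (-(1 / 4 : ℝ)))
          (((2 : ℝ) ^ (-(k : ℝ))) * ((2 : ℝ) ^ (-(j : ℝ))) ^ c)) := by
      intro j
      apply Summable.of_nonneg_of_le
        (f := fun k : ℕ => (((2:ℝ) ^ (-(j:ℝ))) ^ c) * ((2:ℝ) ^ (-(1:ℝ))) ^ k)
        (fun k => le_min (by positivity) (by positivity))
        (fun k => ?_)
        ((summable_geometric_of_lt_one hv0.le hv1).mul_left _)
      refine (min_le_right _ _).trans (le_of_eq ?_)
      simp only [← Real.rpow_natCast]
      simp only [Real.rpow_def_of_pos (by norm_num : (0:ℝ) < 2),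
        ← Real.exp_mul, ← Real.exp_add, Real.exp_eq_exp]
      ring
    calc (∑' jk : ℕ × ℕ,
          min ((|lam| * ((2 : ℝ) ^ (-(jk.1 : ℝ))) ^ a * ((2 : ℝ) ^ (-(jk.2 : ℝ))) ^ b) ^
                (-(1 / 4 : ℝ)))
            (((2 : ℝ) ^ (-(jk.2 : ℝ))) * ((2 : ℝ) ^ (-(jk.1 : ℝ))) ^ c))
        ≤ (Cuv * |lam| ^ (-(1/(θ+2)))) * (1 - r)⁻¹ :=
          tsum_bound2' hr0.le hr1 hg0 hrow key
      _ = (Cuv * (1 - r)⁻¹) * |lam| ^ (-(1 / (θ + 2))) := by ring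
  · -- 0 < B
    rcases eq_or_lt_of_le hA with hA0 | hApos
    · -- A = 0 : a = c(θ-2) > 0, crossover in j
      have haval : a = c * (θ - 2) := by linarith
      have hapos : 0 < a := by rw [haval]; exact mul_pos hc (by linarith)
      have hu : 1 < (2:ℝ) ^ (a/4 : ℝ) :=
        Real.one_lt_rpow_iff_of_pos (by norm_num) |>.mpr (Or.inl ⟨one_lt_two, by positivity⟩)
      have hv0 : (0:ℝ) < (2:ℝ) ^ (-c) := Real.rpow_pos_of_pos two_pos _
      have hv1 : (2:ℝ) ^ (-c) < 1 :=
        Real.rpow_lt_one_of_one_lt_of_neg one_lt_two (by linarith)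
      have huv : ((2:ℝ) ^ (a/4 : ℝ)) ^ (4/(θ+2)) * ((2:ℝ) ^ (-c)) ^ (1 - 4/(θ+2)) = 1 := by
        rw [← Real.rpow_mul (by norm_num), ← Real.rpow_mul (by norm_num),
          ← Real.rpow_add two_pos]
        rw [show a/4 * (4/(θ+2)) + (-c) * (1 - 4/(θ+2)) = 0 by
          rw [haval]; field_simp; ring]
        exact Real.rpow_zero 2
      set Cuv : ℝ := (2:ℝ) ^ (a/4 : ℝ) / ((2:ℝ) ^ (-c) * ((2:ℝ) ^ (a/4 : ℝ) - 1))
          + 1 / (1 - (2:ℝ) ^ (-c)) with hCuv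
      have hCuvpos : 0 < Cuv := by
        have h1 : 0 < (2:ℝ) ^ (a/4 : ℝ) - 1 := by linarith
        have h2 : 0 < 1 - (2:ℝ) ^ (-c) := by linarith
        have := div_pos (lt_trans one_pos hu) (mul_pos hv0 h1)
        positivity
      set s : ℝ := (2:ℝ) ^ (-((θ - 2 - b)/(θ+2))) with hsdef
      have hs0 : 0 < s := Real.rpow_pos_of_pos two_pos _
      have hs1 : s < 1 := by
        rw [hsdef]
        apply Real.rpow_lt_one_of_one_lt_of_neg one_lt_two
        have : 0 < (θ - 2 - b)/(θ+2) := div_pos hBpos hθ2'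
        linarith
      refine ⟨Cuv * (1 - s)⁻¹, mul_pos hCuvpos (inv_pos.mpr (by linarith)),
        fun lam hL => ?_⟩
      have hL0 : (0:ℝ) < |lam| := lt_of_lt_of_le one_pos hL
      rw [← Equiv.tsum_eq (Equiv.prodComm ℕ ℕ)]
      simp only [Equiv.prodComm_apply, Prod.fst_swap, Prod.snd_swap]
      have key : ∀ k : ℕ,
          (∑' j : ℕ, min
            ((|lam| * ((2 : ℝ) ^ (-(j : ℝ))) ^ a * ((2 : ℝ) ^ (-(k : ℝ))) ^ b) ^ (-(1 / 4 : ℝ)))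
            (((2 : ℝ) ^ (-(k : ℝ))) * ((2 : ℝ) ^ (-(j : ℝ))) ^ c)) ≤
          (Cuv * |lam| ^ (-(1/(θ+2)))) * s ^ k := by
        intro k
        have hXpos : 0 < |lam| ^ (-(1/4:ℝ)) * (2:ℝ) ^ ((k:ℝ) * (b/4)) := by positivity
        have hYpos : (0:ℝ) < (2:ℝ) ^ (-(k:ℝ)) := by positivity
        have heq : ∀ j : ℕ,
            min ((|lam| * ((2 : ℝ) ^ (-(j : ℝ))) ^ a * ((2 : ℝ) ^ (-(k : ℝ))) ^ b) ^
                (-(1 / 4 : ℝ)))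
              (((2 : ℝ) ^ (-(k : ℝ))) * ((2 : ℝ) ^ (-(j : ℝ))) ^ c)
            = min ((|lam| ^ (-(1/4:ℝ)) * (2:ℝ) ^ ((k:ℝ) * (b/4))) * ((2:ℝ) ^ (a/4 : ℝ)) ^ j)
                (((2:ℝ) ^ (-(k:ℝ))) * ((2:ℝ) ^ (-c)) ^ j) := by
          intro j
          congr 1
          · repeat rw [Real.mul_rpow (by positivity) (by positivity)]
            simp only [← Real.rpow_natCast]
            simp only [Real.rpow_def_of_pos hL0,
              Real.rpow_def_of_pos (by norm_num : (0:ℝ) < 2),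
              ← Real.exp_mul, ← Real.exp_add, Real.exp_eq_exp]
            ring
          · repeat rw [Real.mul_rpow (by positivity) (by positivity)]
            simp only [← Real.rpow_natCast]
            simp only [Real.rpow_def_of_pos (by norm_num : (0:ℝ) < 2),
              ← Real.exp_mul, ← Real.exp_add, Real.exp_eq_exp]
            ring
        rw [tsum_congr heq]
        have hcr := crossover' hu hv0 hv1 hT0 huv _ _ hXpos hYpos
        apply le_trans hcr
        rw [← hCuv]
        have hid : (|lam| ^ (-(1/4:ℝ)) * (2:ℝ) ^ ((k:ℝ) * (b/4))) ^ (4/(θ+2)) *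
            ((2:ℝ) ^ (-(k:ℝ))) ^ (1 - 4/(θ+2))
            = |lam| ^ (-(1/(θ+2))) * s ^ k := by
          rw [hsdef]
          repeat rw [Real.mul_rpow (by positivity) (by positivity)]
          simp only [← Real.rpow_natCast]
          simp only [Real.rpow_def_of_pos hL0,
            Real.rpow_def_of_pos (by norm_num : (0:ℝ) < 2),
            ← Real.exp_mul, ← Real.exp_add, Real.exp_eq_exp]
          field_simp
          ring
        rw [hid]
        exact le_of_eq (by ring)
      have hg0 : ∀ jk : ℕ × ℕ,
          0 ≤ min ((|lam| * ((2 : ℝ) ^ (-(jk.2 : ℝ))) ^ a * ((2 : ℝ) ^ (-(jk.1 : ℝ))) ^ b) ^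
                  (-(1 / 4 : ℝ)))
              (((2 : ℝ) ^ (-(jk.1 : ℝ))) * ((2 : ℝ) ^ (-(jk.2 : ℝ))) ^ c) :=
        fun jk => le_min (by positivity) (by positivity)
      have hrow : ∀ k : ℕ, Summable (fun j : ℕ =>
          min ((|lam| * ((2 : ℝ) ^ (-(j : ℝ))) ^ a * ((2 : ℝ) ^ (-(k : ℝ))) ^ b) ^
                  (-(1 / 4 : ℝ)))
            (((2 : ℝ) ^ (-(k : ℝ))) * ((2 : ℝ) ^ (-(j : ℝ))) ^ c)) := by
        intro k
        apply Summable.of_nonneg_of_le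
          (f := fun j : ℕ => ((2:ℝ) ^ (-(k:ℝ))) * ((2:ℝ) ^ (-c)) ^ j)
          (fun j => le_min (by positivity) (by positivity))
          (fun j => ?_)
          ((summable_geometric_of_lt_one hv0.le hv1).mul_left _)
        refine (min_le_right _ _).trans (le_of_eq ?_)
        simp only [← Real.rpow_natCast]
        simp only [Real.rpow_def_of_pos (by norm_num : (0:ℝ) < 2),
          ← Real.exp_mul, ← Real.exp_add, Real.exp_eq_exp]
        ring
      calc (∑' jk : ℕ × ℕ,
            min ((|lam| * ((2 : ℝ) ^ (-(jk.2 : ℝ))) ^ a * ((2 : ℝ) ^ (-(jk.1 : ℝ))) ^ b) ^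
                  (-(1 / 4 : ℝ)))
              (((2 : ℝ) ^ (-(jk.1 : ℝ))) * ((2 : ℝ) ^ (-(jk.2 : ℝ))) ^ c))
          ≤ (Cuv * |lam| ^ (-(1/(θ+2)))) * (1 - s)⁻¹ :=
            tsum_bound2' hs0.le hs1 hg0 hrow key
        _ = (Cuv * (1 - s)⁻¹) * |lam| ^ (-(1 / (θ + 2))) := by ring
    · -- both A and B positive : pure interpolation
      set r : ℝ := (2:ℝ) ^ (-((c * (θ - 2) - a)/(θ+2))) with hrdef
      have hr0 : 0 < r := Real.rpow_pos_of_pos two_pos _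
      have hr1 : r < 1 := by
        rw [hrdef]
        apply Real.rpow_lt_one_of_one_lt_of_neg one_lt_two
        have : 0 < (c * (θ - 2) - a)/(θ+2) := div_pos hApos hθ2'
        linarith
      set s : ℝ := (2:ℝ) ^ (-((θ - 2 - b)/(θ+2))) with hsdef
      have hs0 : 0 < s := Real.rpow_pos_of_pos two_pos _
      have hs1 : s < 1 := by
        rw [hsdef]
        apply Real.rpow_lt_one_of_one_lt_of_neg one_lt_two
        have : 0 < (θ - 2 - b)/(θ+2) := div_pos hBpos hθ2'
        linarith
      refine ⟨(1 - r)⁻¹ * (1 - s)⁻¹,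
        mul_pos (inv_pos.mpr (by linarith)) (inv_pos.mpr (by linarith)),
        fun lam hL => ?_⟩
      have hL0 : (0:ℝ) < |lam| := lt_of_lt_of_le one_pos hL
      have hg0 : ∀ jk : ℕ × ℕ,
          0 ≤ min ((|lam| * ((2 : ℝ) ^ (-(jk.1 : ℝ))) ^ a * ((2 : ℝ) ^ (-(jk.2 : ℝ))) ^ b) ^
                  (-(1 / 4 : ℝ)))
              (((2 : ℝ) ^ (-(jk.2 : ℝ))) * ((2 : ℝ) ^ (-(jk.1 : ℝ))) ^ c) :=
        fun jk => le_min (by positivity) (by positivity)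
      have hle : ∀ jk : ℕ × ℕ,
          min ((|lam| * ((2 : ℝ) ^ (-(jk.1 : ℝ))) ^ a * ((2 : ℝ) ^ (-(jk.2 : ℝ))) ^ b) ^
                  (-(1 / 4 : ℝ)))
              (((2 : ℝ) ^ (-(jk.2 : ℝ))) * ((2 : ℝ) ^ (-(jk.1 : ℝ))) ^ c)
            ≤ |lam| ^ (-(1/(θ+2))) * (r ^ jk.1 * s ^ jk.2) := by
        intro jk
        have hS1 : 0 < (|lam| * ((2 : ℝ) ^ (-(jk.1 : ℝ))) ^ a *
            ((2 : ℝ) ^ (-(jk.2 : ℝ))) ^ b) ^ (-(1 / 4 : ℝ)) := by positivity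
        have hS2 : 0 < ((2 : ℝ) ^ (-(jk.2 : ℝ))) * ((2 : ℝ) ^ (-(jk.1 : ℝ))) ^ c := by
          positivity
        refine (min_le_rpow_interp' hS1 hS2 hT0.le hT1).trans (le_of_eq ?_)
        rw [hrdef, hsdef]
        repeat rw [Real.mul_rpow (by positivity) (by positivity)]
        simp only [← Real.rpow_natCast]
        simp only [Real.rpow_def_of_pos hL0,
          Real.rpow_def_of_pos (by norm_num : (0:ℝ) < 2),
          ← Real.exp_mul, ← Real.exp_add, Real.exp_eq_exp]
        field_simp
        ring
      calc (∑' jk : ℕ × ℕ,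
            min ((|lam| * ((2 : ℝ) ^ (-(jk.1 : ℝ))) ^ a * ((2 : ℝ) ^ (-(jk.2 : ℝ))) ^ b) ^
                  (-(1 / 4 : ℝ)))
              (((2 : ℝ) ^ (-(jk.2 : ℝ))) * ((2 : ℝ) ^ (-(jk.1 : ℝ))) ^ c))
          ≤ |lam| ^ (-(1/(θ+2))) * ((1 - r)⁻¹ * (1 - s)⁻¹) :=
            tsum_bound' hr0.le hr1 hs0.le hs1 hg0 hle
        _ = ((1 - r)⁻¹ * (1 - s)⁻¹) * |lam| ^ (-(1 / (θ + 2))) := by ring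
end
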